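/- arXiv:2402.13150 — 3 statements merged into one kernel-verified Lean document; each statement's English description precedes it below -/
import Mathlib

section
/- Let ρ, ω, τ be density matrices on ℂ^n and A₁,…,A_k Hermitian matrices. Define d²(σ,μ) := Σ_j ( tr(√σ A_j √σ A_j) + tr(√μ A_j √μ A_j) − 2 tr(σ A_j) tr(μ A_j) ) for density matrices σ, μ. Then d²(σ,μ) ≥ 0 for all σ, μ, and the triangle inequality √(d²(ρ,τ)) ≤ √(d²(ρ,ω)) + √(d²(ω,τ)) holds. -/
open Matrix
open scoped ComplexOrder

/-- The positive semidefinite square root of a positive semidefinite matrix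
(as defined in Mathlib before it was removed). -/
noncomputable def Matrix.PosSemidef.sqrt {n 𝕜 : Type*} [Fintype n] [DecidableEq n] [RCLike 𝕜]
    {A : Matrix n n 𝕜} (hA : A.PosSemidef) : Matrix n n 𝕜 :=
  hA.1.eigenvectorUnitary.1 * diagonal ((↑) ∘ (√·) ∘ hA.1.eigenvalues) *
    (star hA.1.eigenvectorUnitary : Matrix n n 𝕜)

theorem Matrix.PosSemidef.sqrt_mul_self {n 𝕜 : Type*} [Fintype n] [DecidableEq n] [RCLike 𝕜]
    {A : Matrix n n 𝕜} (hA : A.PosSemidef) : hA.sqrt * hA.sqrt = A := by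
  have hU : (star hA.1.eigenvectorUnitary : Matrix n n 𝕜) * hA.1.eigenvectorUnitary.1 = 1 := by
    simp
  have hD : diagonal ((↑) ∘ (√·) ∘ hA.1.eigenvalues) * diagonal ((↑) ∘ (√·) ∘ hA.1.eigenvalues)
      = diagonal (RCLike.ofReal ∘ hA.1.eigenvalues : n → 𝕜) := by
    rw [diagonal_mul_diagonal]
    congr 1
    funext i
    simp only [Function.comp_apply, ← RCLike.ofReal_mul,
      Real.mul_self_sqrt (hA.eigenvalues_nonneg i)]
  conv_rhs => rw [hA.1.spectral_theorem, Unitary.conjStarAlgAut_apply]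
  unfold Matrix.PosSemidef.sqrt
  simp only [Matrix.mul_assoc]
  rw [← Matrix.mul_assoc _ hA.1.eigenvectorUnitary.1, hU, Matrix.one_mul,
    ← Matrix.mul_assoc (diagonal _) (diagonal _), hD]

theorem Matrix.PosSemidef.posSemidef_sqrt {n 𝕜 : Type*} [Fintype n] [DecidableEq n] [RCLike 𝕜]
    {A : Matrix n n 𝕜} (hA : A.PosSemidef) : hA.sqrt.PosSemidef := by
  have h := (PosSemidef.diagonal (d := ((↑) ∘ (√·) ∘ hA.1.eigenvalues : n → 𝕜))
    (fun i => by simp [Real.sqrt_nonneg])).mul_mul_conjTranspose_same hA.1.eigenvectorUnitary.1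
  unfold Matrix.PosSemidef.sqrt
  convert h using 2
  simp [star_eq_conjTranspose]

/-- The squared quantum Wasserstein divergence (explicit form, valid when one of the
states is pure):
`d²(σ,μ) = Σⱼ ( tr(√σ Aⱼ √σ Aⱼ) + tr(√μ Aⱼ √μ Aⱼ) − 2 tr(σAⱼ) tr(μAⱼ) )`. -/
noncomputable def qwDivSq {n k : ℕ} (A : Fin k → Matrix (Fin n) (Fin n) ℂ)
    (σ μ : Matrix (Fin n) (Fin n) ℂ) (hσ : σ.PosSemidef) (hμ : μ.PosSemidef) : ℝ :=
  ∑ j, (((hσ.sqrt * A j * hσ.sqrt * A j).trace).re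
      + ((hμ.sqrt * A j * hμ.sqrt * A j).trace).re
      - 2 * ((σ * A j).trace).re * ((μ * A j).trace).re)

noncomputable def matVec {n : ℕ} (M : Matrix (Fin n) (Fin n) ℂ) :
    EuclideanSpace ℂ (Fin n × Fin n) := WithLp.toLp 2 (fun p : Fin n × Fin n => M p.1 p.2)

lemma inner_matVec {n : ℕ} (M N : Matrix (Fin n) (Fin n) ℂ) :
    (inner ℂ (matVec M) (matVec N) : ℂ) = (Mᴴ * N).trace := by
  simp only [PiLp.inner_apply, RCLike.inner_apply', matVec, PiLp.toLp_apply, Matrix.trace,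
    Matrix.diag_apply, Matrix.mul_apply, conjTranspose_apply]
  rw [Fintype.sum_prod_type, Finset.sum_comm]
  simp [RCLike.star_def]

lemma key' {n : ℕ} {σ S T A : Matrix (Fin n) (Fin n) ℂ}
    (hσherm : σᴴ = σ) (hσ1 : σ.trace = 1)
    (hSherm : Sᴴ = S) (hTherm : Tᴴ = T)
    (hTT : T * T = S) (hSS : S * S = σ) (hA : Aᴴ = A) :
    ((σ * A).trace).re ^ 2 ≤ ((S * A * S * A).trace).re := by
  have h1 : (inner ℂ (matVec S) (matVec (T * A * T)) : ℂ) = (σ * A).trace := by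
    rw [inner_matVec, hSherm]
    calc (S * (T * A * T)).trace = ((S * (T * A)) * T).trace := by congr 1; noncomm_ring
      _ = (T * (S * (T * A))).trace := trace_mul_comm _ _
      _ = (σ * A).trace := by rw [← hSS, ← hTT]; congr 1; noncomm_ring
  have h2 : (inner ℂ (matVec S) (matVec S) : ℂ) = 1 := by
    rw [inner_matVec, hSherm, hSS, hσ1]
  have h3 : (inner ℂ (matVec (T * A * T)) (matVec (T * A * T)) : ℂ)
      = (S * A * S * A).trace := by
    rw [inner_matVec]
    have hQ : (T * A * T)ᴴ = T * A * T := by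
      simp [conjTranspose_mul, hTherm, hA, Matrix.mul_assoc]
    rw [hQ]
    calc (T * A * T * (T * A * T)).trace = ((T * A * (T * T) * A) * T).trace := by
          congr 1; noncomm_ring
      _ = (T * (T * A * (T * T) * A)).trace := trace_mul_comm _ _
      _ = (S * A * S * A).trace := by rw [← hTT]; congr 1; noncomm_ring
  have hreal : (starRingEnd ℂ) ((σ * A).trace) = (σ * A).trace := by
    have h := Matrix.trace_conjTranspose (σ * A)
    rw [conjTranspose_mul, hA, hσherm, trace_mul_comm] at h
    simpa [RCLike.star_def] using h.symm
  have hsym : (inner ℂ (matVec (T * A * T)) (matVec S) : ℂ) = (σ * A).trace := by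
    rw [← inner_conj_symm, h1, hreal]
  have hcs := inner_mul_inner_self_le (𝕜 := ℂ) (matVec S) (matVec (T * A * T))
  rw [h1, h2, h3, hsym] at hcs
  simp only [RCLike.one_re, RCLike.re_to_complex] at hcs
  have h4 : |((σ * A).trace).re| ≤ ‖(σ * A).trace‖ := Complex.abs_re_le_norm _
  nlinarith [norm_nonneg ((σ * A).trace), abs_nonneg (((σ * A).trace).re),
    sq_abs (((σ * A).trace).re)]

lemma key {n : ℕ} {σ : Matrix (Fin n) (Fin n) ℂ} (hσ : σ.PosSemidef) (hσ1 : σ.trace = 1)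
    {A : Matrix (Fin n) (Fin n) ℂ} (hA : A.IsHermitian) :
    ((σ * A).trace).re ^ 2 ≤ ((hσ.sqrt * A * hσ.sqrt * A).trace).re :=
  key' hσ.isHermitian.eq hσ1 hσ.posSemidef_sqrt.isHermitian.eq
    hσ.posSemidef_sqrt.posSemidef_sqrt.isHermitian.eq
    hσ.posSemidef_sqrt.sqrt_mul_self hσ.sqrt_mul_self hA.eq

/-- `d² ≥ 0` for all density matrices, and the triangle inequality
`√(d²(ρ,τ)) ≤ √(d²(ρ,ω)) + √(d²(ω,τ))` holds. -/
theorem stmt_4 {n k : ℕ} (A : Fin k → Matrix (Fin n) (Fin n) ℂ)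
    (hA : ∀ j, (A j).IsHermitian)
    (ρ ω τ : Matrix (Fin n) (Fin n) ℂ)
    (hρ : ρ.PosSemidef) (hρ1 : ρ.trace = 1)
    (hω : ω.PosSemidef) (hω1 : ω.trace = 1)
    (hτ : τ.PosSemidef) (hτ1 : τ.trace = 1) :
    (∀ (σ μ : Matrix (Fin n) (Fin n) ℂ) (hσ : σ.PosSemidef) (hμ : μ.PosSemidef),
        σ.trace = 1 → μ.trace = 1 → 0 ≤ qwDivSq A σ μ hσ hμ) ∧
    Real.sqrt (qwDivSq A ρ τ hρ hτ)
      ≤ Real.sqrt (qwDivSq A ρ ω hρ hω) + Real.sqrt (qwDivSq A ω τ hω hτ) := by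
  have hdecomp : ∀ (σ μ : Matrix (Fin n) (Fin n) ℂ)
      (hσ : σ.PosSemidef) (hμ : μ.PosSemidef),
      qwDivSq A σ μ hσ hμ =
        (∑ j, (((hσ.sqrt * A j * hσ.sqrt * A j).trace).re - ((σ * A j).trace).re ^ 2))
        + (∑ j, (((hμ.sqrt * A j * hμ.sqrt * A j).trace).re - ((μ * A j).trace).re ^ 2))
        + ∑ j, (((σ * A j).trace).re - ((μ * A j).trace).re) ^ 2 := by
    intro σ μ hσ hμ
    unfold qwDivSq
    rw [← Finset.sum_add_distrib, ← Finset.sum_add_distrib]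
    exact Finset.sum_congr rfl fun j _ => by ring
  have hnonneg : ∀ (σ μ : Matrix (Fin n) (Fin n) ℂ)
      (hσ : σ.PosSemidef) (hμ : μ.PosSemidef),
      σ.trace = 1 → μ.trace = 1 → 0 ≤ qwDivSq A σ μ hσ hμ := by
    intro σ μ hσ hμ h1 h2
    rw [hdecomp]
    have t1 : 0 ≤ ∑ j, (((hσ.sqrt * A j * hσ.sqrt * A j).trace).re
        - ((σ * A j).trace).re ^ 2) :=
      Finset.sum_nonneg fun j _ => by linarith [key hσ h1 (hA j)]
    have t2 : 0 ≤ ∑ j, (((hμ.sqrt * A j * hμ.sqrt * A j).trace).re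
        - ((μ * A j).trace).re ^ 2) :=
      Finset.sum_nonneg fun j _ => by linarith [key hμ h2 (hA j)]
    have t3 : 0 ≤ ∑ j, (((σ * A j).trace).re - ((μ * A j).trace).re) ^ 2 :=
      Finset.sum_nonneg fun j _ => sq_nonneg _
    linarith
  refine ⟨hnonneg, ?_⟩
  set mρ : Fin k → ℝ := fun j => ((ρ * A j).trace).re with hmρ
  set mω : Fin k → ℝ := fun j => ((ω * A j).trace).re with hmω
  set mτ : Fin k → ℝ := fun j => ((τ * A j).trace).re with hmτ
  set aSq : ℝ := ∑ j, (((hρ.sqrt * A j * hρ.sqrt * A j).trace).re - mρ j ^ 2) with haSq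
  set bSq : ℝ := ∑ j, (((hω.sqrt * A j * hω.sqrt * A j).trace).re - mω j ^ 2) with hbSq
  set cSq : ℝ := ∑ j, (((hτ.sqrt * A j * hτ.sqrt * A j).trace).re - mτ j ^ 2) with hcSq
  have ha : 0 ≤ aSq := Finset.sum_nonneg fun j _ => by linarith [key hρ hρ1 (hA j)]
  have hb : 0 ≤ bSq := Finset.sum_nonneg fun j _ => by linarith [key hω hω1 (hA j)]
  have hc : 0 ≤ cSq := Finset.sum_nonneg fun j _ => by linarith [key hτ hτ1 (hA j)]
  -- Euclidean embedding
  set toE : ((Fin k ⊕ Fin 3) → ℝ) → EuclideanSpace ℝ (Fin k ⊕ Fin 3) :=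
    fun v => (WithLp.equiv 2 ((Fin k ⊕ Fin 3) → ℝ)).symm v with htoE
  set P : EuclideanSpace ℝ (Fin k ⊕ Fin 3) :=
    toE (Sum.elim mρ (fun t => if t = 0 then Real.sqrt aSq else 0)) with hP
  set Q : EuclideanSpace ℝ (Fin k ⊕ Fin 3) :=
    toE (Sum.elim mω (fun t => if t = 1 then Real.sqrt bSq else 0)) with hQ
  set R : EuclideanSpace ℝ (Fin k ⊕ Fin 3) :=
    toE (Sum.elim mτ (fun t => if t = 2 then Real.sqrt cSq else 0)) with hRdef
  have hdist : ∀ (x y : Fin k → ℝ) (s t : Fin 3 → ℝ),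
      dist (toE (Sum.elim x s)) (toE (Sum.elim y t))
      = Real.sqrt ((∑ j, (x j - y j) ^ 2) +
          ((s 0 - t 0) ^ 2 + (s 1 - t 1) ^ 2 + (s 2 - t 2) ^ 2)) := by
    intro x y s t
    rw [EuclideanSpace.dist_eq]
    congr 1
    rw [Fintype.sum_sum_type, Fin.sum_univ_three]
    simp [htoE, Real.dist_eq, sq_abs]
  have e1 : dist P R = Real.sqrt (qwDivSq A ρ τ hρ hτ) := by
    rw [hP, hRdef, hdist]
    congr 1
    rw [hdecomp ρ τ hρ hτ]
    simp only [Fin.isValue, Fin.reduceEq, reduceIte, if_true, if_false, sub_zero,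
      zero_sub, zero_pow, neg_sq, sub_self]
    rw [Real.sq_sqrt ha, Real.sq_sqrt hc]
    ring
  have e2 : dist P Q = Real.sqrt (qwDivSq A ρ ω hρ hω) := by
    rw [hP, hQ, hdist]
    congr 1
    rw [hdecomp ρ ω hρ hω]
    simp only [Fin.isValue, Fin.reduceEq, reduceIte, if_true, if_false, sub_zero,
      zero_sub, zero_pow, neg_sq, sub_self]
    rw [Real.sq_sqrt ha, Real.sq_sqrt hb]
    ring
  have e3 : dist Q R = Real.sqrt (qwDivSq A ω τ hω hτ) := by
    rw [hQ, hRdef, hdist]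
    congr 1
    rw [hdecomp ω τ hω hτ]
    simp only [Fin.isValue, Fin.reduceEq, reduceIte, if_true, if_false, sub_zero,
      zero_sub, zero_pow, neg_sq, sub_self]
    rw [Real.sq_sqrt hb, Real.sq_sqrt hc]
    ring
  calc Real.sqrt (qwDivSq A ρ τ hρ hτ) = dist P R := e1.symm
    _ ≤ dist P Q + dist Q R := dist_triangle _ _ _
    _ = _ := by rw [e2, e3]
end

section
/- Let X be a Hermitian 2×2 matrix with −4·I ≤ X ≤ 4·I (in the Loewner order). Then the symmetric qubit cost operator C_s := Σ_{j=1}^{3} (σ_j ⊗ I − I ⊗ σ_jᵀ)² on ℂ²⊗ℂ² satisfies C_s ≥ X ⊗ I − I ⊗ Xᵀ in the Loewner order. -/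
open Matrix Kronecker
open scoped ComplexOrder

noncomputable def pauli : Fin 3 → Matrix (Fin 2) (Fin 2) ℂ
  | 0 => !![0, 1; 1, 0]
  | 1 => !![0, -Complex.I; Complex.I, 0]
  | 2 => !![1, 0; 0, -1]

/-- The symmetric qubit cost operator `C_s = Σⱼ (σⱼ⊗I − I⊗σⱼᵀ)²`. -/
noncomputable def symCost : Matrix (Fin 2 × Fin 2) (Fin 2 × Fin 2) ℂ :=
  ∑ j : Fin 3, (pauli j ⊗ₖ (1 : Matrix (Fin 2) (Fin 2) ℂ)
      - (1 : Matrix (Fin 2) (Fin 2) ℂ) ⊗ₖ (pauli j)ᵀ) ^ 2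

noncomputable def Pm : Matrix (Fin 2 × Fin 2) (Fin 2 × Fin 2) ℂ :=
  Matrix.of fun p q => if p.1 = p.2 ∧ q.1 = q.2 then (1/2 : ℂ) else 0

lemma kron_psd {A B : Matrix (Fin 2) (Fin 2) ℂ} (hA : A.PosSemidef) (hB : B.PosSemidef) :
    (A ⊗ₖ B).PosSemidef := by
  exact Matrix.PosSemidef.kronecker hA hB

lemma Pm_idem : Pm * Pm = Pm := by
  ext ⟨i,j⟩ ⟨k,l⟩
  simp [Pm, Matrix.mul_apply, Fintype.sum_prod_type, Fin.sum_univ_two]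
  fin_cases i <;> fin_cases j <;> fin_cases k <;> fin_cases l <;> norm_num

lemma Pm_herm : Pmᴴ = Pm := by
  ext ⟨i,j⟩ ⟨k,l⟩
  simp [Pm, Matrix.conjTranspose_apply, and_comm, apply_ite (starRingEnd ℂ),
    map_inv₀, Complex.conj_ofNat]

set_option maxHeartbeats 2000000 in
lemma symCost_eq : symCost = (8:ℂ) • 1 - (8:ℂ) • Pm := by
  rw [symCost, Fin.sum_univ_three]
  ext ⟨i,j⟩ ⟨k,l⟩
  fin_cases i <;> fin_cases j <;> fin_cases k <;> fin_cases l <;>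
    · simp [Pm, pauli, pow_two, Matrix.mul_apply, Fintype.sum_prod_type,
        Fin.sum_univ_two, Matrix.one_apply, Matrix.transpose_apply, Prod.ext_iff,
        Matrix.vecHead, Matrix.vecTail]
      try norm_num

lemma Pm_mul_Y (X : Matrix (Fin 2) (Fin 2) ℂ) :
    Pm * (X ⊗ₖ (1 : Matrix (Fin 2) (Fin 2) ℂ)
      - (1 : Matrix (Fin 2) (Fin 2) ℂ) ⊗ₖ Xᵀ) = 0 := by
  ext ⟨i,j⟩ ⟨k,l⟩
  fin_cases i <;> fin_cases j <;> fin_cases k <;> fin_cases l <;>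
    · simp [Pm, Matrix.mul_apply, Fintype.sum_prod_type, Fin.sum_univ_two,
        Matrix.one_apply, Matrix.transpose_apply, Prod.ext_iff]
      try ring

lemma Y_mul_Pm (X : Matrix (Fin 2) (Fin 2) ℂ) :
    (X ⊗ₖ (1 : Matrix (Fin 2) (Fin 2) ℂ)
      - (1 : Matrix (Fin 2) (Fin 2) ℂ) ⊗ₖ Xᵀ) * Pm = 0 := by
  ext ⟨i,j⟩ ⟨k,l⟩
  fin_cases i <;> fin_cases j <;> fin_cases k <;> fin_cases l <;>
    · simp [Pm, Matrix.mul_apply, Fintype.sum_prod_type, Fin.sum_univ_two,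
        Matrix.one_apply, Matrix.transpose_apply, Prod.ext_iff]
      try ring

/-- If `X` is Hermitian with `−4I ≤ X ≤ 4I` (Loewner order), then
`C_s ≥ X⊗I − I⊗Xᵀ` in the Loewner order. -/
theorem stmt_7 (X : Matrix (Fin 2) (Fin 2) ℂ) (hX : X.IsHermitian)
    (h₁ : (X + (4 : ℂ) • (1 : Matrix (Fin 2) (Fin 2) ℂ)).PosSemidef)
    (h₂ : ((4 : ℂ) • (1 : Matrix (Fin 2) (Fin 2) ℂ) - X).PosSemidef) :
    (symCost - (X ⊗ₖ (1 : Matrix (Fin 2) (Fin 2) ℂ)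
      - (1 : Matrix (Fin 2) (Fin 2) ℂ) ⊗ₖ Xᵀ)).PosSemidef := by
  set Y : Matrix (Fin 2 × Fin 2) (Fin 2 × Fin 2) ℂ :=
    X ⊗ₖ (1 : Matrix (Fin 2) (Fin 2) ℂ) - (1 : Matrix (Fin 2) (Fin 2) ℂ) ⊗ₖ Xᵀ with hY
  have hM : ((8:ℂ) • (1 : Matrix (Fin 2 × Fin 2) (Fin 2 × Fin 2) ℂ) - Y).PosSemidef := by
    have key : (8:ℂ) • (1 : Matrix (Fin 2 × Fin 2) (Fin 2 × Fin 2) ℂ) - Y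
        = ((4:ℂ) • 1 - X) ⊗ₖ (1 : Matrix (Fin 2) (Fin 2) ℂ)
          + (1 : Matrix (Fin 2) (Fin 2) ℂ) ⊗ₖ (X + (4:ℂ) • 1)ᵀ := by
      rw [hY]
      ext ⟨i,j⟩ ⟨k,l⟩
      rcases eq_or_ne i k with hik | hik <;> rcases eq_or_ne j l with hjl | hjl <;>
        simp [Matrix.one_apply, Matrix.transpose_apply, Prod.ext_iff, Matrix.smul_apply,
          hik, hjl] <;> ring
    rw [key]
    exact (kron_psd h₂ Matrix.PosSemidef.one).add
      (kron_psd Matrix.PosSemidef.one h₁.transpose)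
  have key : symCost - Y = (1 - Pm)ᴴ * ((8:ℂ) • 1 - Y) * (1 - Pm) := by
    have h1 : (1 - Pm)ᴴ = 1 - Pm := by
      rw [Matrix.conjTranspose_sub, Matrix.conjTranspose_one, Pm_herm]
    rw [h1, symCost_eq]
    have hPmM : Pm * ((8:ℂ) • 1 - Y) = (8:ℂ) • Pm := by
      rw [mul_sub, mul_smul_comm, mul_one, hY, Pm_mul_Y, sub_zero]
    have hMPm : ((8:ℂ) • 1 - Y) * Pm = (8:ℂ) • Pm := by
      rw [sub_mul, smul_mul_assoc, one_mul, hY, Y_mul_Pm, sub_zero]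
    have expand : ∀ M : Matrix (Fin 2 × Fin 2) (Fin 2 × Fin 2) ℂ,
        (1 - Pm) * M * (1 - Pm) = M - M * Pm - Pm * M + Pm * (M * Pm) := by
      intro M; noncomm_ring
    rw [expand, hMPm, hPmM, mul_smul_comm, Pm_idem]
    abel
  rw [key]
  exact hM.conjTranspose_mul_mul_same _
end

section
/- Let A₁,…,A_k be positive semidefinite n×n matrices, and let Π be a density matrix on ℂ^n ⊗ ℂ^n whose partial traces are ω (over the second factor) and ρᵀ (over the first factor). Define α := tr((Σ_j A_j²)·ω) and β := tr((Σ_j A_j²)·ρ), and assume α, β > 0. Then tr(Π · Σ_j (A_j⊗I − I⊗A_jᵀ)²) ≥ 2( (α+β)/2 − √(αβ) ). -/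
open Matrix Kronecker
open scoped ComplexOrder

lemma psd_trace_re_nonneg {m : Type*} [Fintype m] [DecidableEq m]
    {M : Matrix m m ℂ} (h : M.PosSemidef) : 0 ≤ M.trace.re := by
  have hdiag : ∀ i, 0 ≤ M i i := fun i => by
    exact h.diag_nonneg
  have : (0:ℝ) ≤ ∑ i, (M i i).re :=
    Finset.sum_nonneg fun i _ => (Complex.le_def.mp (hdiag i)).1
  simpa [Matrix.trace, Matrix.diag, Complex.re_sum] using this

lemma trace_mul_psd_re_nonneg {m : Type*} [Fintype m] [DecidableEq m] {P Q : Matrix m m ℂ}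
    (hP : P.PosSemidef) (hQ : Q.PosSemidef) : 0 ≤ ((P * Q).trace).re := by
  obtain ⟨B, hB⟩ : ∃ B : Matrix m m ℂ, Q = Bᴴ * B := by
    open scoped MatrixOrder in
    obtain ⟨X, hX, -, hXQ⟩ :=
      sub_zero Q ▸ CFC.exists_sqrt_of_isSelfAdjoint_of_quasispectrumRestricts hQ.isHermitian
        (QuasispectrumRestricts.nnreal_of_nonneg hQ.nonneg)
    exact ⟨X, by rw [← sub_zero Q, ← hXQ, ← Matrix.star_eq_conjTranspose, hX.star_eq]⟩
  have h1 : (P * Q).trace = (B * P * Bᴴ).trace := by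
    rw [hB, Matrix.trace_mul_comm, Matrix.mul_assoc, Matrix.trace_mul_comm, Matrix.mul_assoc]
  rw [h1]
  exact psd_trace_re_nonneg (hP.mul_mul_conjTranspose_same B)

lemma kron_conjTranspose {m p : Type*} [Fintype m] [Fintype p]
    (M : Matrix m m ℂ) (N : Matrix p p ℂ) : (M ⊗ₖ N)ᴴ = Mᴴ ⊗ₖ Nᴴ := by
  ext ⟨i, a⟩ ⟨j, b⟩
  simp [Matrix.conjTranspose_apply, Matrix.kroneckerMap_apply]

lemma smul_sub_sq {m : Type*} [Fintype m] [DecidableEq m] (a b : ℂ) (X Y : Matrix m m ℂ) :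
    (a • X - b • Y) ^ 2
      = (a * a) • (X * X) + (b * b) • (Y * Y) - (a * b) • (X * Y) - (a * b) • (Y * X) := by
  rw [sq]
  rw [sub_mul, mul_sub, mul_sub]
  rw [smul_mul_smul_comm, smul_mul_smul_comm, smul_mul_smul_comm, smul_mul_smul_comm]
  rw [mul_comm b a]
  abel

lemma ptrace_fst {n : ℕ} (P : Matrix (Fin n × Fin n) (Fin n × Fin n) ℂ)
    (ω : Matrix (Fin n) (Fin n) ℂ) (hfst : ∀ i j, ∑ m, P (i, m) (j, m) = ω i j)
    (M : Matrix (Fin n) (Fin n) ℂ) :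
    (P * (M ⊗ₖ (1 : Matrix (Fin n) (Fin n) ℂ))).trace = (M * ω).trace := by
  have lhs : (P * (M ⊗ₖ (1 : Matrix (Fin n) (Fin n) ℂ))).trace
      = ∑ i, ∑ j, (∑ m, P (i, m) (j, m)) * M j i := by
    simp only [Matrix.trace, Matrix.diag, Matrix.mul_apply, Matrix.kroneckerMap_apply,
      Matrix.one_apply, Fintype.sum_prod_type, mul_ite, mul_one, mul_zero,
      Finset.sum_ite_eq, Finset.sum_ite_eq', Finset.mem_univ, if_true]
    exact Finset.sum_congr rfl fun i _ => by
      rw [Finset.sum_comm]; simp_rw [Finset.sum_mul]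
  rw [lhs]
  simp_rw [hfst]
  rw [Matrix.trace, Finset.sum_comm]
  simp only [Matrix.diag, Matrix.mul_apply]
  simp_rw [mul_comm]

lemma ptrace_snd {n : ℕ} (P : Matrix (Fin n × Fin n) (Fin n × Fin n) ℂ)
    (ρ : Matrix (Fin n) (Fin n) ℂ) (hsnd : ∀ i j, ∑ m, P (m, i) (m, j) = ρᵀ i j)
    (N : Matrix (Fin n) (Fin n) ℂ) :
    (P * ((1 : Matrix (Fin n) (Fin n) ℂ) ⊗ₖ N)).trace = (N * ρᵀ).trace := by
  have lhs : (P * ((1 : Matrix (Fin n) (Fin n) ℂ) ⊗ₖ N)).trace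
      = ∑ m, ∑ l, (∑ i, P (i, m) (i, l)) * N l m := by
    simp only [Matrix.trace, Matrix.diag, Matrix.mul_apply, Matrix.kroneckerMap_apply,
      Matrix.one_apply, Fintype.sum_prod_type, ite_mul, one_mul, zero_mul, mul_ite,
      mul_one, mul_zero, Finset.sum_ite_eq, Finset.sum_ite_eq', Finset.mem_univ, if_true]
    have key : ∀ (x x1 : Fin n),
        (∑ x2, ∑ x3, if x2 = x then P (x, x1) (x2, x3) * N x3 x1 else 0)
          = ∑ x3, P (x, x1) (x, x3) * N x3 x1 := by
      intro x x1; rw [Finset.sum_comm]; simp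
    simp_rw [key]
    rw [Finset.sum_comm]
    refine Finset.sum_congr rfl fun x1 _ => ?_
    rw [Finset.sum_comm]
    simp_rw [Finset.sum_mul]
  rw [lhs]
  simp_rw [hsnd]
  rw [Matrix.trace, Finset.sum_comm]
  simp only [Matrix.diag, Matrix.mul_apply]
  simp_rw [mul_comm]

lemma key_identity {m : Type*} [Fintype m] [DecidableEq m] {s : ℝ} (hs : 0 < s)
    (X Y : Matrix m m ℂ) :
    (X - Y) ^ 2 = ((Real.sqrt s : ℂ) • X - ((Real.sqrt s : ℂ))⁻¹ • Y) ^ 2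
      + ((1 : ℂ) - (s : ℂ)) • (X * X) + ((1 : ℂ) - (s : ℂ)⁻¹) • (Y * Y) := by
  have hc : (Real.sqrt s : ℂ) * (Real.sqrt s : ℂ) = (s : ℂ) := by
    rw [← Complex.ofReal_mul, Real.mul_self_sqrt hs.le]
  have hc0 : (Real.sqrt s : ℂ) ≠ 0 := by
    simp [Complex.ofReal_ne_zero, Real.sqrt_ne_zero', hs]
  have h1 : (X - Y) ^ 2
      = ((1:ℂ)*1) • (X*X) + ((1:ℂ)*1) • (Y*Y) - ((1:ℂ)*1) • (X*Y) - ((1:ℂ)*1) • (Y*X) := by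
    simpa using smul_sub_sq 1 1 X Y
  have hinv : ((Real.sqrt s : ℂ))⁻¹ * ((Real.sqrt s : ℂ))⁻¹ = (s:ℂ)⁻¹ := by
    rw [← mul_inv, hc]
  have hone : (Real.sqrt s : ℂ) * ((Real.sqrt s : ℂ))⁻¹ = 1 := mul_inv_cancel₀ hc0
  rw [smul_sub_sq, h1, hc, hinv, hone]
  simp only [one_mul, one_smul]
  module

/-- Hellinger-type lower bound for the quantum transport cost: if `Π` is a coupling of
`ω` and `ρᵀ` and `α = tr((ΣⱼAⱼ²)ω) > 0`, `β = tr((ΣⱼAⱼ²)ρ) > 0`, then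
`tr(Π·Σⱼ(Aⱼ⊗I − I⊗Aⱼᵀ)²) ≥ 2((α+β)/2 − √(αβ))`. -/
theorem stmt_14 {n k : ℕ} (A : Fin k → Matrix (Fin n) (Fin n) ℂ)
    (hA : ∀ j, (A j).PosSemidef)
    (ρ ω : Matrix (Fin n) (Fin n) ℂ)
    (P : Matrix (Fin n × Fin n) (Fin n × Fin n) ℂ)
    (hP : P.PosSemidef) (hP1 : P.trace = 1)
    (hfst : ∀ i j, ∑ m, P (i, m) (j, m) = ω i j)
    (hsnd : ∀ i j, ∑ m, P (m, i) (m, j) = ρᵀ i j)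
    (α β : ℝ)
    (hα : (α : ℂ) = ((∑ j, (A j) ^ 2) * ω).trace) (hα0 : 0 < α)
    (hβ : (β : ℂ) = ((∑ j, (A j) ^ 2) * ρ).trace) (hβ0 : 0 < β) :
    ((P * ∑ j, (A j ⊗ₖ (1 : Matrix (Fin n) (Fin n) ℂ)
        - (1 : Matrix (Fin n) (Fin n) ℂ) ⊗ₖ (A j)ᵀ) ^ 2).trace).re
      ≥ 2 * ((α + β) / 2 - Real.sqrt (α * β)) := by
  classical
  have hsqα : 0 < Real.sqrt α := Real.sqrt_pos.mpr hα0
  have hsqβ : 0 < Real.sqrt β := Real.sqrt_pos.mpr hβ0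
  set s : ℝ := Real.sqrt β / Real.sqrt α with hsdef
  have hs : 0 < s := div_pos hsqβ hsqα
  set c : ℂ := (Real.sqrt s : ℂ) with hcdef
  -- notation
  set X : Fin k → Matrix (Fin n × Fin n) (Fin n × Fin n) ℂ :=
    fun j => (A j) ⊗ₖ (1 : Matrix (Fin n) (Fin n) ℂ) with hXdef
  set Y : Fin k → Matrix (Fin n × Fin n) (Fin n × Fin n) ℂ :=
    fun j => (1 : Matrix (Fin n) (Fin n) ℂ) ⊗ₖ (A j)ᵀ with hYdef
  set B : Fin k → Matrix (Fin n × Fin n) (Fin n × Fin n) ℂ :=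
    fun j => c • X j - c⁻¹ • Y j with hBdef
  have hXX : ∀ j, X j * X j = ((A j) ^ 2) ⊗ₖ (1 : Matrix (Fin n) (Fin n) ℂ) := by
    intro j
    simpa [sq] using (Matrix.mul_kronecker_mul (A j) (A j)
      (1 : Matrix (Fin n) (Fin n) ℂ) (1 : Matrix (Fin n) (Fin n) ℂ)).symm
  have hYY : ∀ j, Y j * Y j = (1 : Matrix (Fin n) (Fin n) ℂ) ⊗ₖ (((A j) ^ 2)ᵀ) := by
    intro j
    simpa [sq, Matrix.transpose_mul] using (Matrix.mul_kronecker_mul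
      (1 : Matrix (Fin n) (Fin n) ℂ) (1 : Matrix (Fin n) (Fin n) ℂ) ((A j)ᵀ) ((A j)ᵀ)).symm
  -- Hermitianity of B j and positivity of its square
  have hBpsd : ∀ j, ((B j) ^ 2).PosSemidef := by
    intro j
    have hBherm : (B j)ᴴ = B j := by
      have hXh : (X j)ᴴ = X j := by
        rw [hXdef]; simp only
        rw [kron_conjTranspose, (hA j).isHermitian.eq, Matrix.conjTranspose_one]
      have hYh : (Y j)ᴴ = Y j := by
        rw [hYdef]; simp only
        rw [kron_conjTranspose, Matrix.conjTranspose_one, (hA j).isHermitian.transpose.eq]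
      rw [hBdef]; simp only
      rw [Matrix.conjTranspose_sub, Matrix.conjTranspose_smul, Matrix.conjTranspose_smul,
        hXh, hYh, hcdef]
      rw [Complex.star_def, ← Complex.ofReal_inv, Complex.conj_ofReal, Complex.conj_ofReal,
        Complex.ofReal_inv]
    have : (B j) ^ 2 = (B j)ᴴ * (B j) := by rw [hBherm, sq]
    rw [this]
    exact Matrix.posSemidef_conjTranspose_mul_self _
  -- trace of each summand
  have htr : ∀ j, (P * (X j - Y j) ^ 2).trace
      = (P * (B j) ^ 2).trace + (1 - (s:ℂ)) * (((A j) ^ 2) * ω).trace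
        + (1 - (s:ℂ)⁻¹) * (((A j) ^ 2) * ρ).trace := by
    intro j
    have hid := key_identity hs (X j) (Y j)
    have hBj : ((Real.sqrt s : ℂ)) • X j - ((Real.sqrt s : ℂ))⁻¹ • Y j = B j := rfl
    rw [hBj, hXX, hYY] at hid
    rw [hid]
    rw [Matrix.mul_add, Matrix.mul_add, Matrix.trace_add, Matrix.trace_add,
      Matrix.mul_smul, Matrix.mul_smul, Matrix.trace_smul, Matrix.trace_smul,
      ptrace_fst P ω hfst, ptrace_snd P ρ hsnd]
    have hρ : ((((A j) ^ 2)ᵀ) * ρᵀ).trace = (((A j) ^ 2) * ρ).trace := by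
      rw [← Matrix.transpose_mul, Matrix.trace_transpose, Matrix.trace_mul_comm]
    rw [hρ]
    simp [smul_eq_mul]
  -- sum over j
  have hαs : ∑ j, (((A j) ^ 2) * ω).trace = (α : ℂ) := by
    rw [hα, Finset.sum_mul, Matrix.trace_sum]
  have hβs : ∑ j, (((A j) ^ 2) * ρ).trace = (β : ℂ) := by
    rw [hβ, Finset.sum_mul, Matrix.trace_sum]
  have total : ((P * ∑ j, (X j - Y j) ^ 2).trace)
      = (∑ j, (P * (B j) ^ 2).trace) + (1 - (s:ℂ)) * (α:ℂ) + (1 - (s:ℂ)⁻¹) * (β:ℂ) := by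
    rw [Finset.mul_sum, Matrix.trace_sum]
    simp_rw [htr]
    rw [Finset.sum_add_distrib, Finset.sum_add_distrib, ← Finset.mul_sum, ← Finset.mul_sum,
      hαs, hβs]
  have hT : 0 ≤ (∑ j, (P * (B j) ^ 2).trace).re := by
    rw [Complex.re_sum]
    exact Finset.sum_nonneg fun j _ => trace_mul_psd_re_nonneg hP (hBpsd j)
  have hsa : s * α = Real.sqrt α * Real.sqrt β := by
    have ha : Real.sqrt α * Real.sqrt α = α := Real.mul_self_sqrt hα0.le
    rw [hsdef, div_mul_eq_mul_div, div_eq_iff hsqα.ne']; linear_combination (-Real.sqrt β) * ha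
  have hsb : s⁻¹ * β = Real.sqrt α * Real.sqrt β := by
    have hb : Real.sqrt β * Real.sqrt β = β := Real.mul_self_sqrt hβ0.le
    rw [hsdef, inv_div, div_mul_eq_mul_div, div_eq_iff hsqβ.ne']; linear_combination (-Real.sqrt α) * hb
  have hsqrtmul : Real.sqrt (α * β) = Real.sqrt α * Real.sqrt β := Real.sqrt_mul hα0.le β
  rw [ge_iff_le, total]
  have hcast : (1 - (s:ℂ)) * (α:ℂ) + (1 - (s:ℂ)⁻¹) * (β:ℂ)
      = (((1 - s) * α + (1 - s⁻¹) * β : ℝ) : ℂ) := by push_cast; ring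
  rw [add_assoc, hcast, Complex.add_re, Complex.ofReal_re]
  have harith : (1 - s) * α + (1 - s⁻¹) * β = α + β - 2 * (Real.sqrt α * Real.sqrt β) := by
    linear_combination (-1 : ℝ) * hsa - hsb
  rw [hsqrtmul]
  linarith [hT, harith]
end
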